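/- arXiv:2311.00942 — 2 statements merged into one kernel-verified Lean document; each statement's English description precedes it below -/
import Mathlib

section
/- Let H be a real Hilbert space, M a closed subspace, r > 0, and x ∈ H with ‖x_M‖ > r. Then for every h ∈ H, the directional derivative of P_{B_M(r)} at x along h exists and equals P'_{B_M(r)}(x)(h) = (r/‖x_M‖)(h_M − (⟨x_M, h_M⟩/‖x_M‖²) x_M). In particular, P'_{B_M(r)}(x)(x) = 0. -/
open Filter Topology

/-- The metric projection onto the ball `B_M(r) = {y ∈ M : ‖y‖ ≤ r}` of the closed
subspace `M`, given by `y_M` when `‖y_M‖ ≤ r` and `(r/‖y_M‖) • y_M` otherwise. -/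
noncomputable def projSubBall {H : Type*} [NormedAddCommGroup H] [InnerProductSpace ℝ H]
    (M : Submodule ℝ H) [M.HasOrthogonalProjection] (r : ℝ) (y : H) : H :=
  if ‖(Submodule.orthogonalProjectionOnto M y : H)‖ ≤ r then (Submodule.orthogonalProjectionOnto M y : H)
  else (r / ‖(Submodule.orthogonalProjectionOnto M y : H)‖) • (Submodule.orthogonalProjectionOnto M y : H)

/-!
Outside the ball, near `x`, the projection onto `B_M(r)` coincides with `y ↦ (r / ‖y_M‖) • y_M`,
the radial retraction onto the sphere of radius `r` composed with the orthogonal projection onto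
`M`. Away from `0` the radial retraction is Fréchet differentiable with derivative at `p` equal to
`r / ‖p‖` times the orthogonal projection onto `p^⊥`, so the one-sided directional derivative is
this derivative applied to `h_M`, which vanishes for `h = x`.
-/

section
variable {E : Type*} [NormedAddCommGroup E] [InnerProductSpace ℝ E] {p : E}

theorem hasFDerivAt_norm_of_ne_zero (hp : p ≠ 0) :
    HasFDerivAt (‖·‖) (‖p‖⁻¹ • innerSL ℝ p) p := by
  have hp' : ‖p‖ ^ 2 ≠ 0 := by positivity
  convert (hasStrictFDerivAt_norm_sq p).hasFDerivAt.sqrt hp' using 1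
  · ext y; exact (Real.sqrt_sq (norm_nonneg y)).symm
  · ext y
    simp only [smul_apply, coe_innerSL_apply, smul_eq_mul, Real.sqrt_sq (norm_nonneg p), one_div,
      mul_inv_rev, nsmul_eq_mul, Nat.cast_ofNat]
    field_simp

theorem hasFDerivAt_div_norm_smul (r : ℝ) (hp : p ≠ 0) :
    HasFDerivAt (fun y : E ↦ (r / ‖y‖) • y)
      ((r / ‖p‖) • (ContinuousLinearMap.id ℝ E - (‖p‖ ^ 2)⁻¹ • (innerSL ℝ p).smulRight p)) p := by
  have hnorm : ‖p‖ ≠ 0 := norm_ne_zero_iff.2 hp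
  have hinv := ((hasDerivAt_inv hnorm).comp_hasFDerivAt p (hasFDerivAt_norm_of_ne_zero hp)).const_mul r
  convert hinv.smul (hasFDerivAt_id p) using 1
  · simp only [div_eq_mul_inv]; rfl
  · ext y
    simp only [smul_apply, sub_apply, ContinuousLinearMap.id_apply,
      ContinuousLinearMap.smulRight_apply, coe_innerSL_apply, Function.comp_apply, neg_smul,
      smul_neg, id_eq, add_apply, neg_apply, smul_eq_mul]
    match_scalars <;> field_simp

end

section
variable {H : Type*} [NormedAddCommGroup H] [InnerProductSpace ℝ H]
  (M : Submodule ℝ H) [M.HasOrthogonalProjection] {r : ℝ} {x : H}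

theorem projSubBall_of_lt {y : H} (hy : r < ‖M.starProjection y‖) :
    projSubBall M r y = (r / ‖M.starProjection y‖) • M.starProjection y :=
  if_neg hy.not_ge

theorem projSubBall_eventuallyEq (hx : r < ‖M.starProjection x‖) :
    projSubBall M r =ᶠ[𝓝 x] fun y ↦ (r / ‖M.starProjection y‖) • M.starProjection y := by
  have hopen : IsOpen {y : H | r < ‖M.starProjection y‖} :=
    isOpen_lt continuous_const (by fun_prop)
  filter_upwards [hopen.mem_nhds hx] with y hy using projSubBall_of_lt M hy

theorem hasFDerivAt_projSubBall (hr : 0 < r) (hx : r < ‖M.starProjection x‖) :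
    HasFDerivAt (projSubBall M r)
      (((r / ‖M.starProjection x‖) • (ContinuousLinearMap.id ℝ H -
        (‖M.starProjection x‖ ^ 2)⁻¹ • (innerSL ℝ (M.starProjection x)).smulRight
          (M.starProjection x))).comp M.starProjection) x := by
  have hp : M.starProjection x ≠ 0 := norm_pos_iff.1 (hr.trans hx)
  exact ((hasFDerivAt_div_norm_smul r hp).comp x M.starProjection.hasFDerivAt).congr_of_eventuallyEq
    (projSubBall_eventuallyEq M hx)

end

theorem dirDeriv_projSubBall_outside_general {H : Type*} [NormedAddCommGroup H]
    [InnerProductSpace ℝ H]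
    (M : Submodule ℝ H) [M.HasOrthogonalProjection] (r : ℝ) (hr : 0 < r)
    (x : H) (hx : r < ‖(Submodule.orthogonalProjectionOnto M x : H)‖) :
    (∀ h : H, Tendsto (fun t : ℝ => t⁻¹ • (projSubBall M r (x + t • h) - projSubBall M r x))
      (𝓝[>] (0 : ℝ))
      (𝓝 ((r / ‖(Submodule.orthogonalProjectionOnto M x : H)‖) •
        ((Submodule.orthogonalProjectionOnto M h : H) -
          ((inner ℝ (Submodule.orthogonalProjectionOnto M x : H) (Submodule.orthogonalProjectionOnto M h : H) : ℝ) /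
            ‖(Submodule.orthogonalProjectionOnto M x : H)‖ ^ 2) • (Submodule.orthogonalProjectionOnto M x : H))))) ∧
    Tendsto (fun t : ℝ => t⁻¹ • (projSubBall M r (x + t • x) - projSubBall M r x))
      (𝓝[>] (0 : ℝ)) (𝓝 (0 : H)) := by
  have hp : 0 < ‖M.starProjection x‖ := hr.trans hx
  have hdir (h : H) := ((hasFDerivAt_projSubBall M hr hx).hasLineDerivAt h).tendsto_slope_zero_right
  refine ⟨fun h ↦ ?_, ?_⟩
  · convert hdir h using 2
    simp [div_eq_inv_mul, mul_smul]
  · convert hdir x using 2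
    simp [hp.ne']

/-- If `‖x_M‖ > r`, the directional derivative of the metric projection
onto `B_M(r)` at `x` along any `h` exists and equals
`(r/‖x_M‖)(h_M - (⟨x_M,h_M⟩/‖x_M‖²) x_M)`; in particular it vanishes along `h = x`. -/
theorem dirDeriv_projSubBall_outside {H : Type*} [NormedAddCommGroup H]
    [InnerProductSpace ℝ H] [CompleteSpace H]
    (M : Submodule ℝ H) [M.HasOrthogonalProjection] (r : ℝ) (hr : 0 < r)
    (x : H) (hx : r < ‖(Submodule.orthogonalProjectionOnto M x : H)‖) :
    (∀ h : H, Tendsto (fun t : ℝ => t⁻¹ • (projSubBall M r (x + t • h) - projSubBall M r x))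
      (𝓝[>] (0 : ℝ))
      (𝓝 ((r / ‖(Submodule.orthogonalProjectionOnto M x : H)‖) •
        ((Submodule.orthogonalProjectionOnto M h : H) -
          ((inner ℝ (Submodule.orthogonalProjectionOnto M x : H) (Submodule.orthogonalProjectionOnto M h : H) : ℝ) /
            ‖(Submodule.orthogonalProjectionOnto M x : H)‖ ^ 2) • (Submodule.orthogonalProjectionOnto M x : H))))) ∧
    Tendsto (fun t : ℝ => t⁻¹ • (projSubBall M r (x + t • x) - projSubBall M r x))
      (𝓝[>] (0 : ℝ)) (𝓝 (0 : H)) :=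
  dirDeriv_projSubBall_outside_general M r hr x hx
end

section
/- Let H be a real Hilbert space, M a closed subspace, r > 0, and C_M(r) = {x ∈ H : ‖x_M‖ ≤ r}. For x with ‖x_M‖ > r and any h ∈ H, the directional derivative of the metric projection onto C_M(r) exists and equals P'_{C_M(r)}(x)(h) = (r/‖x_M‖)(h_M − (⟨x_M,h_M⟩/‖x_M‖²) x_M) + h_{M^⊥}, where h_{M^⊥} = h − h_M. In particular, P'_{C_M(r)}(x)(x) = x_{M^⊥}. -/
open Filter Topology

/-- The metric projection onto the cylinder `C_M(r) = {y : ‖y_M‖ ≤ r}`, given by `y`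
when `‖y_M‖ ≤ r` and `(r/‖y_M‖) • y_M + (y - y_M)` otherwise. -/
noncomputable def projCyl {H : Type*} [NormedAddCommGroup H] [InnerProductSpace ℝ H]
    (M : Submodule ℝ H) [M.HasOrthogonalProjection] (r : ℝ) (y : H) : H :=
  if ‖(M.orthogonalProjectionOnto y : H)‖ ≤ r then y
  else (r / ‖(M.orthogonalProjectionOnto y : H)‖) • (M.orthogonalProjectionOnto y : H) +
    (y - (M.orthogonalProjectionOnto y : H))

/-!
Outside the cylinder, `projCyl M r` agrees near `x` with the smooth map
`y ↦ (r / ‖y_M‖) • y_M + y_{M⊥}`, so the one-sided directional derivative is the ordinary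
derivative along the line `t ↦ x + t • h`. It follows from the chain rule and the derivative
`⟪v, v'⟫ / ‖v‖` of the norm along a curve `v` that does not pass through `0`. For `h = x` the
bracket vanishes because `⟪x_M, x_M⟫ = ‖x_M‖²`.
-/

open RealInnerProductSpace

section Calculus

variable {F : Type*} [NormedAddCommGroup F] [InnerProductSpace ℝ F]
  {f : ℝ → F} {f' : F} {t : ℝ}

theorem HasDerivAt.norm (hf : HasDerivAt f f' t) (h0 : f t ≠ 0) :
    HasDerivAt (fun s => ‖f s‖) (⟪f t, f'⟫ / ‖f t‖) t := by
  have hsq : ‖f t‖ ^ 2 ≠ 0 := by positivity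
  convert hf.norm_sq.sqrt hsq using 1
  · simp only [Real.sqrt_sq (norm_nonneg _)]
  · rw [Real.sqrt_sq (norm_nonneg _)]
    field_simp

theorem HasDerivAt.div_norm_smul (c : ℝ) (hf : HasDerivAt f f' t) (h0 : f t ≠ 0) :
    HasDerivAt (fun s => (c / ‖f s‖) • f s)
      ((c / ‖f t‖) • (f' - (⟪f t, f'⟫ / ‖f t‖ ^ 2) • f t)) t := by
  have hn : ‖f t‖ ≠ 0 := norm_ne_zero_iff.mpr h0
  convert ((hasDerivAt_const t c).div (hf.norm h0) hn).smul hf using 1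
  · rfl
  rw [Pi.div_apply, smul_sub, smul_smul, sub_eq_add_neg, ← neg_smul]
  congr 2
  field_simp
  ring

end Calculus

section Cylinder

variable {H : Type*} [NormedAddCommGroup H] [InnerProductSpace ℝ H]
  (M : Submodule ℝ H) [M.HasOrthogonalProjection] {r : ℝ} {x : H}

theorem projCyl_eventuallyEq (hx : r < ‖(M.orthogonalProjectionOnto x : H)‖) :
    projCyl M r =ᶠ[𝓝 x] fun y => (r / ‖(M.orthogonalProjectionOnto y : H)‖) •
      (M.orthogonalProjectionOnto y : H) + (y - (M.orthogonalProjectionOnto y : H)) := by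
  have hcont : Continuous fun y => ‖(M.orthogonalProjectionOnto y : H)‖ := by fun_prop
  filter_upwards [hcont.continuousAt.eventually (Ioi_mem_nhds hx)] with y hy
  exact if_neg (not_le.mpr hy)

theorem hasLineDerivAt_projCyl (hr : 0 ≤ r) (hx : r < ‖(M.orthogonalProjectionOnto x : H)‖)
    (h : H) :
    HasLineDerivAt ℝ (projCyl M r)
      ((r / ‖(M.orthogonalProjectionOnto x : H)‖) •
        ((M.orthogonalProjectionOnto h : H) -
          (⟪(M.orthogonalProjectionOnto x : H), (M.orthogonalProjectionOnto h : H)⟫ /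
            ‖(M.orthogonalProjectionOnto x : H)‖ ^ 2) • (M.orthogonalProjectionOnto x : H)) +
        (h - (M.orthogonalProjectionOnto h : H))) x h := by
  refine HasLineDerivAt.congr_of_eventuallyEq ?_ (projCyl_eventuallyEq M hx)
  have hproj : HasLineDerivAt ℝ (fun y => (M.orthogonalProjectionOnto y : H))
      (M.orthogonalProjectionOnto h : H) x h :=
    M.starProjection.hasFDerivAt.hasLineDerivAt h
  have hid : HasLineDerivAt ℝ id h x h := (hasFDerivAt_id x).hasLineDerivAt h
  have hx0 : (M.orthogonalProjectionOnto (x + (0 : ℝ) • h) : H) ≠ 0 := by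
    simpa using norm_pos_iff.mp (hr.trans_lt hx)
  unfold HasLineDerivAt at *
  convert (hproj.div_norm_smul r hx0).add (hid.sub hproj) using 1
  · rfl
  · simp only [zero_smul, add_zero]

end Cylinder

theorem dirDeriv_projCyl_outside_general {H : Type*} [NormedAddCommGroup H]
    [InnerProductSpace ℝ H]
    (M : Submodule ℝ H) [M.HasOrthogonalProjection] (r : ℝ) (hr : 0 < r)
    (x : H) (hx : r < ‖(M.orthogonalProjectionOnto x : H)‖) :
    (∀ h : H, Tendsto (fun t : ℝ => t⁻¹ • (projCyl M r (x + t • h) - projCyl M r x))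
      (𝓝[>] (0 : ℝ))
      (𝓝 ((r / ‖(M.orthogonalProjectionOnto x : H)‖) •
        ((M.orthogonalProjectionOnto h : H) -
          ((inner ℝ (M.orthogonalProjectionOnto x : H) (M.orthogonalProjectionOnto h : H) : ℝ) /
            ‖(M.orthogonalProjectionOnto x : H)‖ ^ 2) • (M.orthogonalProjectionOnto x : H)) +
        (h - (M.orthogonalProjectionOnto h : H))))) ∧
    Tendsto (fun t : ℝ => t⁻¹ • (projCyl M r (x + t • x) - projCyl M r x))
      (𝓝[>] (0 : ℝ)) (𝓝 (x - (M.orthogonalProjectionOnto x : H))) := by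
  have hderiv h := (hasLineDerivAt_projCyl M hr.le hx h).tendsto_slope_zero_right
  refine ⟨hderiv, ?_⟩
  have hx0 : ‖(M.orthogonalProjectionOnto x : H)‖ ≠ 0 := (hr.trans hx).ne'
  convert hderiv x using 2
  rw [real_inner_self_eq_norm_sq, div_self (pow_ne_zero 2 hx0), one_smul, sub_self, smul_zero,
    zero_add]

/-- If `‖x_M‖ > r`, the directional derivative of the metric projection
onto the cylinder `C_M(r)` at `x` along any `h` exists and equals
`(r/‖x_M‖)(h_M - (⟨x_M,h_M⟩/‖x_M‖²) x_M) + h_{M⊥}`; in particular along `h = x`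
it equals `x_{M⊥} = x - x_M`. -/
theorem dirDeriv_projCyl_outside {H : Type*} [NormedAddCommGroup H]
    [InnerProductSpace ℝ H] [CompleteSpace H]
    (M : Submodule ℝ H) [M.HasOrthogonalProjection] (r : ℝ) (hr : 0 < r)
    (x : H) (hx : r < ‖(M.orthogonalProjectionOnto x : H)‖) :
    (∀ h : H, Tendsto (fun t : ℝ => t⁻¹ • (projCyl M r (x + t • h) - projCyl M r x))
      (𝓝[>] (0 : ℝ))
      (𝓝 ((r / ‖(M.orthogonalProjectionOnto x : H)‖) •
        ((M.orthogonalProjectionOnto h : H) -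
          ((inner ℝ (M.orthogonalProjectionOnto x : H) (M.orthogonalProjectionOnto h : H) : ℝ) /
            ‖(M.orthogonalProjectionOnto x : H)‖ ^ 2) • (M.orthogonalProjectionOnto x : H)) +
        (h - (M.orthogonalProjectionOnto h : H))))) ∧
    Tendsto (fun t : ℝ => t⁻¹ • (projCyl M r (x + t • x) - projCyl M r x))
      (𝓝[>] (0 : ℝ)) (𝓝 (x - (M.orthogonalProjectionOnto x : H))) :=
  dirDeriv_projCyl_outside_general M r hr x hx
end
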